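/- arXiv:1109.3618 — 2 statements merged into one kernel-verified Lean document; each statement's English description precedes it below -/
import Mathlib

section
/- Let n ≥ 3, 0 < m < (n-2)/n, A > 0, 0 < q < 2/(1-m), and let T and k be chosen as in the Young inequality comparison (T = (A/(q(1-m) C*^{1/(1-m)}))^{(n-2-mn)/n}, k = (2/(q(1-m))-1)^{1-m} T^{-2α(1-m)/(n-2-nm)}, C* = 2(n-1)(n-2-nm)/(1-m), α = q/(2-q(1-m))). Then the Barenblatt function at time zero satisfies B_k(x,0) ≤ A |x|^{-q} for all x ≠ 0. -/
open Real

theorem stmt12 (n : ℕ) (hn : 3 ≤ n) (m q A α Cs T k : ℝ) (hm0 : 0 < m)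
    (hm1 : m < ((n : ℝ) - 2) / n) (hq0 : 0 < q) (hq2 : q < 2 / (1 - m)) (hA : 0 < A)
    (hα : α = q / (2 - q * (1 - m)))
    (hCs : Cs = 2 * ((n : ℝ) - 1) * ((n : ℝ) - 2 - n * m) / (1 - m))
    (hT : T = (A / (q * (1 - m) * Cs ^ (1 / (1 - m)))) ^ (((n : ℝ) - 2 - m * n) / n))
    (hk : k = (2 / (q * (1 - m)) - 1) ^ (1 - m) *
      T ^ (-(2 * α * (1 - m)) / ((n : ℝ) - 2 - n * m))) :
    ∀ x : EuclideanSpace ℝ (Fin n), x ≠ 0 →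
      (Cs / (k + T ^ (2 / ((n : ℝ) - 2 - n * m)) * ‖x‖ ^ 2)) ^ (1 / (1 - m)) *
          T ^ ((n : ℝ) / ((n : ℝ) - 2 - n * m))
        ≤ A * ‖x‖ ^ (-q) := by
  intro x hx
  have hn0 : (0:ℝ) < n := by positivity
  have h1m : 0 < 1 - m := by
    have : ((n:ℝ) - 2) / n < 1 := by
      rw [div_lt_one hn0]; linarith
    linarith
  have hβ : 0 < (n:ℝ) - 2 - n * m := by
    have h := (lt_div_iff₀ hn0).mp hm1
    nlinarith
  have hn3 : (3:ℝ) ≤ (n:ℝ) := by exact_mod_cast hn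
  have hCs0 : 0 < Cs := by
    rw [hCs]; apply div_pos (by nlinarith) h1m
  have hr : 0 < ‖x‖ := norm_pos_iff.mpr hx
  set r := ‖x‖ with hrdef
  have hqm2 : q * (1 - m) < 2 := by
    have := (lt_div_iff₀ h1m).mp hq2
    linarith
  set θ : ℝ := q * (1 - m) / 2 with hθ
  have hθ0 : 0 < θ := by positivity
  have hθ1 : θ < 1 := by rw [hθ]; linarith
  have h1θ : 0 < 1 - θ := by linarith
  set p : ℝ := 1 / (1 - m) with hp
  have hp0 : 0 < p := by positivity
  set β : ℝ := (n:ℝ) - 2 - n * m with hβdef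
  set c : ℝ := 2 / (q * (1 - m)) - 1 with hc
  have hc0 : 0 < c := by
    rw [hc]
    have : 1 < 2 / (q * (1 - m)) := by
      rw [lt_div_iff₀ (by positivity)]; linarith
    linarith
  have hceq : c = (1 - θ) / θ := by
    rw [hc, hθ]; field_simp
  have hT0 : 0 < T := by
    rw [hT]; apply rpow_pos_of_pos; positivity
  have hk0 : 0 < k := by
    rw [hk]; positivity
  set s : ℝ := T ^ (2 / β) * r ^ 2 with hs
  have hs0 : 0 < s := by positivity
  set D : ℝ := k + s with hD
  have hD0 : 0 < D := by positivity
  clear_value r θ p β c s D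
  -- Step 1: Cs^p * T^{n/β} = A / (q*(1-m))
  have hTn : Cs ^ p * T ^ ((n:ℝ) / β) = A / (q * (1 - m)) := by
    rw [hT, ← rpow_mul (by positivity)]
    have he : ((n:ℝ) - 2 - m * n) / n * ((n:ℝ) / β) = 1 := by
      have hb : (n:ℝ) - 2 - m * n = β := by rw [hβdef]; ring
      rw [hb]
      field_simp
    rw [he, rpow_one, hp]
    have hCsp : (0:ℝ) < Cs ^ (1 / (1 - m)) := rpow_pos_of_pos hCs0 _
    field_simp
  -- Step 2: geometric mean inequality
  have hgm : k ^ (1 - θ) * s ^ θ ≤ D := by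
    calc k ^ (1 - θ) * s ^ θ ≤ (1 - θ) * k + θ * s :=
          geom_mean_le_arith_mean2_weighted h1θ.le hθ0.le hk0.le hs0.le (by ring)
      _ ≤ D := by rw [hD]; nlinarith
  have hDp : (k ^ (1 - θ) * s ^ θ) ^ p ≤ D ^ p :=
    rpow_le_rpow (by positivity) hgm hp0.le
  -- Step 3: exponent computations
  have hE : (0:ℝ) < 2 - q * (1 - m) := by linarith
  have e1 : k ^ ((1 - θ) * p) = c ^ (1 - θ) * T ^ (-(q / β)) := by
    rw [hk, mul_rpow (by positivity) (by positivity), ← rpow_mul hc0.le, ← rpow_mul hT0.le]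
    congr 1
    · congr 1
      rw [hp]; field_simp
    · congr 1
      rw [hα, hp, hθ]
      field_simp
  have e2 : s ^ (θ * p) = T ^ (q / β) * r ^ q := by
    rw [hs, ← rpow_natCast r 2, mul_rpow (by positivity) (by positivity),
      ← rpow_mul hT0.le, ← rpow_mul hr.le]
    congr 2
    · rw [hθ, hp]; field_simp
    · rw [hθ, hp]; push_cast; field_simp
  have hks : (k ^ (1 - θ) * s ^ θ) ^ p = c ^ (1 - θ) * r ^ q := by
    rw [mul_rpow (by positivity) (by positivity), ← rpow_mul hk0.le, ← rpow_mul hs0.le,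
      e1, e2, rpow_neg hT0.le]
    have hTq : (0:ℝ) < T ^ (q / β) := rpow_pos_of_pos hT0 _
    field_simp
  -- Step 4: 1 ≤ 2θ c^(1-θ)
  have hkey : 1 ≤ 2 * θ * c ^ (1 - θ) := by
    have hg := geom_mean_le_arith_mean2_weighted hθ0.le h1θ.le
      (le_of_lt (div_pos one_pos hθ0)) (le_of_lt (div_pos one_pos h1θ)) (by ring)
    have hsum : θ * (1/θ) + (1-θ) * (1/(1-θ)) = 2 := by
      field_simp
      norm_num
    rw [hsum, one_div, one_div, inv_rpow hθ0.le, inv_rpow h1θ.le] at hg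
    -- hg : (θ^θ)⁻¹ * ((1-θ)^(1-θ))⁻¹ ≤ 2
    have ha : (0:ℝ) < θ ^ θ := rpow_pos_of_pos hθ0 _
    have hb : (0:ℝ) < (1-θ) ^ (1-θ) := rpow_pos_of_pos h1θ _
    have h2 : 1 ≤ 2 * (θ ^ θ * (1-θ) ^ (1-θ)) := by
      have h1 : (1:ℝ) = (θ ^ θ)⁻¹ * ((1-θ) ^ (1-θ))⁻¹ * (θ ^ θ * (1-θ) ^ (1-θ)) := by
        field_simp
      calc (1:ℝ) = (θ ^ θ)⁻¹ * ((1-θ) ^ (1-θ))⁻¹ * (θ ^ θ * (1-θ) ^ (1-θ)) := h1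
        _ ≤ 2 * (θ ^ θ * (1-θ) ^ (1-θ)) :=
            mul_le_mul_of_nonneg_right hg (mul_pos ha hb).le
    have hθθ : θ ^ θ = θ / θ ^ (1 - θ) := by
      have h : θ ^ θ = θ ^ (1 - (1 - θ)) := by norm_num
      rw [h, rpow_sub hθ0, rpow_one]
    have hcc : 2 * θ * c ^ (1 - θ) = 2 * (θ ^ θ * (1-θ) ^ (1-θ)) := by
      rw [hceq, div_rpow h1θ.le hθ0.le, hθθ]
      ring
    rw [hcc]
    exact h2
  -- Step 5: main chain
  have hchain : r ^ q ≤ q * (1 - m) * D ^ p := by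
    have h2θ : 2 * θ = q * (1 - m) := by rw [hθ]; ring
    calc r ^ q = 1 * r ^ q := (one_mul _).symm
      _ ≤ (2 * θ * c ^ (1 - θ)) * r ^ q :=
          mul_le_mul_of_nonneg_right hkey (rpow_nonneg hr.le q)
      _ = q * (1 - m) * (k ^ (1 - θ) * s ^ θ) ^ p := by rw [hks, ← h2θ]; ring
      _ ≤ q * (1 - m) * D ^ p := mul_le_mul_of_nonneg_left hDp (by positivity)
  -- conclude
  rw [div_rpow hCs0.le hD0.le, rpow_neg hr.le]
  have hrw : Cs ^ p / D ^ p * T ^ ((n:ℝ) / β) = A / (q * (1 - m)) / D ^ p := by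
    rw [← hTn]; ring
  rw [hrw, div_le_iff₀ (by positivity : (0:ℝ) < D ^ p),
    div_le_iff₀ (by positivity : (0:ℝ) < q * (1 - m))]
  have hrq : (0:ℝ) < r ^ q := rpow_pos_of_pos hr q
  calc A = A * (r ^ q)⁻¹ * r ^ q := by field_simp
    _ ≤ A * (r ^ q)⁻¹ * (q * (1 - m) * D ^ p) :=
        mul_le_mul_of_nonneg_left hchain (by positivity)
    _ = A * (r ^ q)⁻¹ * D ^ p * (q * (1 - m)) := by ring
end

section
/- Let n ≥ 3, 0 < q < n/p where p ≥ 1, A > 0, and let ū_0 : ℝ^n → [0,∞) be locally L^p with lim_{|x|→∞} |x|^q ū_0(x) = A and ∫_{|x|≤r} ū_{0,γ}^p dx ≤ C(1 + r^{n-pq}) uniformly in γ ≥ 1, where ū_{0,γ}(x) = γ^q ū_0(γ x). Then for every R > 0, lim_{γ→∞} ∫_{|x| ≤ R} |ū_{0,γ}(x) - A|x|^{-q}| dx = 0. -/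
open MeasureTheory Real Filter Metric Set Pointwise
set_option maxHeartbeats 2000000

lemma aux_integrableOn_rpow (n : ℕ) (hn : 0 < n) {q : ℝ} (hq0 : 0 < q) (hqn : q < n) (R : ℝ) :
    IntegrableOn (fun x : EuclideanSpace ℝ (Fin n) => ‖x‖ ^ (-q))
      (Metric.closedBall 0 R) volume := by
  have hfm : Measurable fun x : EuclideanSpace ℝ (Fin n) => ‖x‖ ^ (-q) := by fun_prop
  refine ⟨hfm.aestronglyMeasurable, ?_⟩
  rw [hasFiniteIntegral_iff_ofReal (Eventually.of_forall fun x =>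
    Real.rpow_nonneg (norm_nonneg x) _)]
  rw [lintegral_eq_lintegral_meas_le _ (Eventually.of_forall fun x =>
    Real.rpow_nonneg (norm_nonneg x) _) hfm.aemeasurable]
  set ν := (volume : Measure (EuclideanSpace ℝ (Fin n))).restrict (Metric.closedBall 0 R)
  have hsplit : (∫⁻ t in Ioi (0:ℝ), ν {a | t ≤ ‖a‖ ^ (-q)}) ≤
      (∫⁻ t in Ioc (0:ℝ) 1, ν {a | t ≤ ‖a‖ ^ (-q)}) +
        ∫⁻ t in Ioi (1:ℝ), ν {a | t ≤ ‖a‖ ^ (-q)} := by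
    rw [← Ioc_union_Ioi_eq_Ioi (zero_le_one : (0:ℝ) ≤ 1)]
    exact lintegral_union_le _ _ _
  refine lt_of_le_of_lt hsplit (ENNReal.add_lt_top.2 ⟨?_, ?_⟩)
  · calc (∫⁻ t in Ioc (0:ℝ) 1, ν {a | t ≤ ‖a‖ ^ (-q)})
        ≤ ∫⁻ _ in Ioc (0:ℝ) 1, volume (Metric.closedBall (0:EuclideanSpace ℝ (Fin n)) R) := by
          refine lintegral_mono fun t => ?_
          exact le_trans (measure_mono (subset_univ _))
            (by rw [Measure.restrict_apply_univ])
      _ = volume (Metric.closedBall (0:EuclideanSpace ℝ (Fin n)) R) * volume (Ioc (0:ℝ) 1) :=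
          setLIntegral_const _ _
      _ < ⊤ := ENNReal.mul_lt_top measure_closedBall_lt_top
          (by rw [Real.volume_Ioc]; exact ENNReal.ofReal_lt_top)
  · have hqne : q ≠ 0 := ne_of_gt hq0
    have key : ∀ t ∈ Ioi (1:ℝ), ν {a | t ≤ ‖a‖ ^ (-q)} ≤
        ENNReal.ofReal (t ^ (-((n:ℝ)/q))) * volume (Metric.ball (0:EuclideanSpace ℝ (Fin n)) 1) := by
      intro t ht
      have ht0 : (0:ℝ) < t := lt_trans zero_lt_one ht
      have hsub : {a : EuclideanSpace ℝ (Fin n) | t ≤ ‖a‖ ^ (-q)} ⊆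
          Metric.closedBall 0 (t ^ (-q⁻¹)) := by
        intro a ha
        simp only [mem_setOf_eq] at ha
        have hapos : 0 < ‖a‖ := by
          rcases eq_or_lt_of_le (norm_nonneg a) with h | h
          · exfalso
            rw [← h, Real.zero_rpow (neg_ne_zero.2 hqne)] at ha
            linarith
          · exact h
        rw [mem_closedBall_zero_iff]
        have h1 : (‖a‖ ^ (-q)) ^ (-q⁻¹) ≤ t ^ (-q⁻¹) :=
          Real.rpow_le_rpow_of_nonpos ht0 ha (neg_nonpos.2 (inv_nonneg.2 hq0.le))
        calc ‖a‖ = (‖a‖ ^ (-q)) ^ (-q⁻¹) := by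
              rw [← Real.rpow_mul (norm_nonneg a)]
              rw [show (-q) * (-q⁻¹) = q * q⁻¹ by ring, mul_inv_cancel₀ hqne, Real.rpow_one]
          _ ≤ t ^ (-q⁻¹) := h1
      have hb : ν {a : EuclideanSpace ℝ (Fin n) | t ≤ ‖a‖ ^ (-q)} ≤
          volume (Metric.closedBall (0:EuclideanSpace ℝ (Fin n)) (t ^ (-q⁻¹))) :=
        le_trans (Measure.restrict_apply_le _ _) (measure_mono hsub)
      refine hb.trans ?_
      rw [Measure.addHaar_closedBall _ _ (Real.rpow_nonneg ht0.le _)]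
      have : (t ^ (-q⁻¹)) ^ Module.finrank ℝ (EuclideanSpace ℝ (Fin n)) = t ^ (-((n:ℝ)/q)) := by
        rw [finrank_euclideanSpace_fin, ← Real.rpow_natCast (t ^ (-q⁻¹)) n,
          ← Real.rpow_mul ht0.le]
        congr 1
        field_simp
      rw [this]
    calc (∫⁻ t in Ioi (1:ℝ), ν {a | t ≤ ‖a‖ ^ (-q)})
        ≤ ∫⁻ t in Ioi (1:ℝ), ENNReal.ofReal (t ^ (-((n:ℝ)/q))) *
            volume (Metric.ball (0:EuclideanSpace ℝ (Fin n)) 1) := by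
          refine setLIntegral_mono (by fun_prop) key
      _ = (∫⁻ t in Ioi (1:ℝ), ENNReal.ofReal (t ^ (-((n:ℝ)/q)))) *
            volume (Metric.ball (0:EuclideanSpace ℝ (Fin n)) 1) :=
          lintegral_mul_const' _ _ measure_ball_lt_top.ne
      _ < ⊤ := by
          refine ENNReal.mul_lt_top ?_ measure_ball_lt_top
          have hlt : -((n:ℝ)/q) < -1 := by
            rw [neg_lt_neg_iff]
            rw [lt_div_iff₀ hq0]
            linarith
          exact (integrableOn_Ioi_rpow_of_lt hlt zero_lt_one).setLIntegral_lt_top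

lemma aux_comp_smul {n : ℕ} {f : EuclideanSpace ℝ (Fin n) → ℝ} {γ : ℝ} (hγ : 0 < γ) {r : ℝ}
    (h : IntegrableOn f (Metric.closedBall 0 (γ * r)) volume) :
    IntegrableOn (fun x => f (γ • x)) (Metric.closedBall 0 r) volume := by
  have hemb : MeasurableEmbedding (fun x : EuclideanSpace ℝ (Fin n) => γ • x) :=
    (Homeomorph.smul (isUnit_iff_ne_zero.2 hγ.ne').unit).measurableEmbedding
  have hpre : (fun x : EuclideanSpace ℝ (Fin n) => γ • x) ⁻¹' (Metric.closedBall 0 (γ * r)) =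
      Metric.closedBall 0 r := by
    ext x
    simp only [mem_preimage, mem_closedBall_zero_iff, norm_smul, Real.norm_eq_abs,
      abs_of_pos hγ]
    exact mul_le_mul_iff_right₀ hγ
  have hc0 : ENNReal.ofReal |((γ:ℝ) ^ Module.finrank ℝ (EuclideanSpace ℝ (Fin n)))⁻¹| ≠ 0 := by
    rw [Ne, ENNReal.ofReal_eq_zero, not_le, abs_pos]
    positivity
  have h1 : Integrable f
      ((((volume : Measure (EuclideanSpace ℝ (Fin n))).restrict
        ((fun x => γ • x) ⁻¹' Metric.closedBall 0 (γ * r))).map (fun x => γ • x))) := by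
    rw [← Measure.restrict_map (measurable_const_smul γ) measurableSet_closedBall,
      Measure.map_addHaar_smul volume hγ.ne', Measure.restrict_smul]
    exact (integrable_smul_measure hc0 ENNReal.ofReal_ne_top).mpr h
  have := hemb.integrable_map_iff.mp h1
  rw [hpre] at this
  exact this

theorem stmt15 (n : ℕ) (hn : 3 ≤ n) (q p A C : ℝ) (hq0 : 0 < q) (hp : 1 ≤ p)
    (hqp : q < (n : ℝ) / p) (hA : 0 < A)
    (ubar : EuclideanSpace ℝ (Fin n) → ℝ)
    (hmeas : Measurable ubar) (hnonneg : ∀ x, 0 ≤ ubar x)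
    (hloc : LocallyIntegrable (fun x => ubar x ^ p) volume)
    (hlim : Tendsto (fun x => ‖x‖ ^ q * ubar x)
      (cocompact (EuclideanSpace ℝ (Fin n))) (nhds A))
    (hLp : ∀ γ : ℝ, 1 ≤ γ → ∀ r : ℝ, 0 < r →
      (∫ x in Metric.closedBall (0 : EuclideanSpace ℝ (Fin n)) r,
          (γ ^ q * ubar (γ • x)) ^ p) ≤ C * (1 + r ^ ((n : ℝ) - p * q))) :
    ∀ R : ℝ, 0 < R →
      Tendsto (fun γ : ℝ =>
          ∫ x in Metric.closedBall (0 : EuclideanSpace ℝ (Fin n)) R,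
            |γ ^ q * ubar (γ • x) - A * ‖x‖ ^ (-q)|) atTop (nhds 0) := by
  intro R hR
  have hn0 : 0 < n := by omega
  have hp0 : 0 < p := lt_of_lt_of_le one_pos hp
  have hqn : q < (n : ℝ) := lt_of_lt_of_le hqp (div_le_self (Nat.cast_nonneg n) hp)
  -- local integrability of ubar on closed balls
  have hIu : ∀ s : ℝ, IntegrableOn ubar (Metric.closedBall 0 s) volume := by
    intro s
    have hK : IsCompact (Metric.closedBall (0 : EuclideanSpace ℝ (Fin n)) s) :=
      isCompact_closedBall _ _
    have h1 : IntegrableOn (fun x => 1 + ubar x ^ p) (Metric.closedBall 0 s) volume :=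
      (integrableOn_const hK.measure_lt_top.ne).add (hloc.integrableOn_isCompact hK)
    refine h1.mono' hmeas.aestronglyMeasurable.restrict (Eventually.of_forall fun x => ?_)
    rw [Real.norm_eq_abs, abs_of_nonneg (hnonneg x)]
    rcases le_total (ubar x) 1 with h | h
    · have : (0:ℝ) ≤ ubar x ^ p := Real.rpow_nonneg (hnonneg x) p
      linarith
    · have h2 : ubar x ^ (1:ℝ) ≤ ubar x ^ p := Real.rpow_le_rpow_of_exponent_le h hp
      rw [Real.rpow_one] at h2
      linarith
  have hIh : ∀ s : ℝ, IntegrableOn (fun x : EuclideanSpace ℝ (Fin n) => ‖x‖ ^ (-q))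
      (Metric.closedBall 0 s) volume := fun s => aux_integrableOn_rpow n hn0 hq0 hqn s
  rw [Metric.tendsto_atTop]
  intro ε hε
  set c₀ := ∫ x in Metric.closedBall (0 : EuclideanSpace ℝ (Fin n)) R, ‖x‖ ^ (-q) with hc₀def
  have hc₀ : 0 ≤ c₀ := setIntegral_nonneg measurableSet_closedBall
    (fun x _ => Real.rpow_nonneg (norm_nonneg x) _)
  set ε' := min 1 (ε / (4 * (c₀ + 1))) with hε'def
  have hε'pos : 0 < ε' := lt_min one_pos (div_pos hε (by linarith))
  have hε'1 : ε' ≤ 1 := min_le_left _ _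
  have hε'c₀ : ε' * c₀ < ε / 4 := by
    have h1 : ε' * c₀ ≤ ε / (4 * (c₀ + 1)) * c₀ :=
      mul_le_mul_of_nonneg_right (min_le_right _ _) hc₀
    have h2 : ε / (4 * (c₀ + 1)) * c₀ < ε / 4 := by
      rw [div_mul_eq_mul_div, div_lt_div_iff₀ (by linarith) (by norm_num)]
      nlinarith
    linarith
  -- extract R₀ from hlim
  obtain ⟨K, hK, hKsub⟩ := Filter.mem_cocompact.mp
    (hlim (Metric.closedBall_mem_nhds A hε'pos))
  obtain ⟨r₀, hr₀sub⟩ := hK.isBounded.subset_closedBall 0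
  set R₀ := max r₀ 0 + 1 with hR₀def
  have hR₀1 : (1:ℝ) ≤ R₀ := by
    have := le_max_right r₀ 0
    simp only [hR₀def]; linarith
  have hR₀pos : 0 < R₀ := lt_of_lt_of_le one_pos hR₀1
  have hR₀ : ∀ y : EuclideanSpace ℝ (Fin n), R₀ ≤ ‖y‖ → |‖y‖ ^ q * ubar y - A| ≤ ε' := by
    intro y hy
    have hyK : y ∉ K := by
      intro hyK
      have := hr₀sub hyK
      rw [mem_closedBall_zero_iff] at this
      have h1 := le_max_left r₀ 0
      simp only [hR₀def] at hy
      linarith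
    have := hKsub hyK
    simpa [Metric.mem_closedBall, Real.dist_eq] using this
  set M := ∫ y in Metric.closedBall (0 : EuclideanSpace ℝ (Fin n)) R₀, ubar y with hMdef
  have hM0 : 0 ≤ M := setIntegral_nonneg measurableSet_closedBall (fun x _ => hnonneg x)
  -- choose δ
  set s : ℕ → Set (EuclideanSpace ℝ (Fin n)) :=
    fun i => Metric.closedBall 0 (R / (i + 1)) with hsdef
  have hanti : Antitone s := by
    intro i j hij
    apply Metric.closedBall_subset_closedBall
    have h1 : (0:ℝ) < (i:ℝ) + 1 := by positivity
    have h2 : ((i:ℝ) + 1) ≤ (j:ℝ) + 1 := by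
      have : (i:ℝ) ≤ (j:ℝ) := Nat.cast_le.mpr hij
      linarith
    exact div_le_div_of_nonneg_left hR.le h1 h2
  have hiInter : (⋂ i, s i) = {(0 : EuclideanSpace ℝ (Fin n))} := by
    ext x
    simp only [mem_iInter, hsdef, mem_closedBall_zero_iff, mem_singleton_iff]
    constructor
    · intro hx
      have hdiv : Tendsto (fun i : ℕ => R / ((i:ℝ) + 1)) atTop (nhds 0) := by
        apply Tendsto.div_atTop tendsto_const_nhds
        exact tendsto_atTop_add_const_right atTop 1 tendsto_natCast_atTop_atTop
      have : ‖x‖ ≤ 0 := ge_of_tendsto' hdiv hx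
      exact norm_le_zero_iff.mp this
    · rintro rfl i
      rw [norm_zero]
      exact div_nonneg hR.le (by positivity)
  have htend : Tendsto (fun i => ∫ x in s i, ‖x‖ ^ (-q)) atTop (nhds 0) := by
    have h0 : (∫ x in (⋂ i, s i), ‖x‖ ^ (-q)) = 0 := by
      haveI : Nontrivial (EuclideanSpace ℝ (Fin n)) :=
        Module.nontrivial_of_finrank_pos (R := ℝ)
          (by rw [finrank_euclideanSpace_fin]; exact hn0)
      rw [hiInter]
      rw [Measure.restrict_eq_zero.mpr (measure_singleton _), integral_zero_measure]
    have := Antitone.tendsto_setIntegral (fun i => measurableSet_closedBall) hanti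
      (hIh (R / ((0:ℕ) + 1)))
    rwa [h0] at this
  obtain ⟨i, hi⟩ := (htend.eventually_lt_const
    (show (0:ℝ) < ε / (4 * (2 * A + 1)) from div_pos hε (by linarith))).exists
  set δ := R / ((i:ℝ) + 1) with hδdef
  have hδpos : 0 < δ := div_pos hR (by positivity)
  have hδR : δ ≤ R := by
    rw [hδdef]
    apply div_le_self hR.le
    have : (0:ℝ) ≤ (i:ℝ) := Nat.cast_nonneg i
    linarith
  set cδ := ∫ x in Metric.closedBall (0 : EuclideanSpace ℝ (Fin n)) δ, ‖x‖ ^ (-q) with hcδdef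
  have hcδε : (2 * A + 1) * cδ < ε / 4 := by
    have h1 : cδ < ε / (4 * (2 * A + 1)) := hi
    have h2 : (0:ℝ) < 2 * A + 1 := by linarith
    rw [lt_div_iff₀ (by linarith)] at h1
    nlinarith
  -- eventual bound on γ ^ (q - n) * M
  have hγev : ∀ᶠ γ : ℝ in atTop, γ ^ (q - (n:ℝ)) * M < ε / 4 := by
    have ht : Tendsto (fun γ : ℝ => γ ^ (q - (n:ℝ)) * M) atTop (nhds 0) := by
      have h1 : Tendsto (fun γ : ℝ => γ ^ (-((n:ℝ) - q))) atTop (nhds 0) :=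
        tendsto_rpow_neg_atTop (by linarith)
      have h2 := h1.mul_const M
      rw [zero_mul] at h2
      convert h2 using 2
      rw [neg_sub]
    exact ht.eventually_lt_const (by positivity)
  obtain ⟨Γ, hΓ⟩ := eventually_atTop.mp hγev
  refine ⟨max (max 1 Γ) (R₀ / δ), fun γ hγ => ?_⟩
  have hγ1 : (1:ℝ) ≤ γ := le_trans (le_trans (le_max_left 1 Γ) (le_max_left _ _)) hγ
  have hγpos : (0:ℝ) < γ := lt_of_lt_of_le one_pos hγ1
  have hγΓ : Γ ≤ γ := le_trans (le_trans (le_max_right 1 Γ) (le_max_left _ _)) hγ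
  have hγδ : R₀ ≤ γ * δ := by
    have h1 : R₀ / δ ≤ γ := le_trans (le_max_right _ _) hγ
    rw [div_le_iff₀ hδpos] at h1
    linarith [h1]
  have hR₀γδ : R₀ / γ ≤ δ := by
    rw [div_le_iff₀ hγpos]
    linarith [hγδ, mul_comm γ δ]
  have hR₀γpos : 0 < R₀ / γ := div_pos hR₀pos hγpos
  -- abbreviations
  set f1 : EuclideanSpace ℝ (Fin n) → ℝ := fun x => γ ^ q * ubar (γ • x) with hf1def
  set h' : EuclideanSpace ℝ (Fin n) → ℝ := fun x => ‖x‖ ^ (-q) with hh'def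
  have hIf1 : ∀ s : ℝ, IntegrableOn f1 (Metric.closedBall 0 s) volume := by
    intro s
    exact (aux_comp_smul hγpos (hIu (γ * s))).const_mul _
  have hIg : ∀ s : ℝ, IntegrableOn (fun x => |f1 x - A * h' x|)
      (Metric.closedBall 0 s) volume := fun s =>
    ((hIf1 s).sub ((hIh s).const_mul A)).abs
  -- key pointwise identity
  have hkey : ∀ x : EuclideanSpace ℝ (Fin n), x ≠ 0 →
      f1 x - A * h' x = h' x * (‖γ • x‖ ^ q * ubar (γ • x) - A) := by
    intro x hx
    have hxpos : 0 < ‖x‖ := norm_pos_iff.mpr hx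
    have h1 : ‖γ • x‖ ^ q = γ ^ q * ‖x‖ ^ q := by
      rw [norm_smul, Real.norm_eq_abs, abs_of_pos hγpos, Real.mul_rpow hγpos.le (norm_nonneg x)]
    have h2 : h' x * ‖x‖ ^ q = 1 := by
      rw [hh'def]
      rw [← Real.rpow_add hxpos]
      simp
    have h3 : h' x * (‖γ • x‖ ^ q * ubar (γ • x) - A) =
        (h' x * ‖x‖ ^ q) * (γ ^ q * ubar (γ • x)) - h' x * A := by
      rw [h1]; ring
    rw [h3, h2, one_mul, hf1def]
    ring
  have hnormsmul : ∀ x : EuclideanSpace ℝ (Fin n), ‖γ • x‖ = γ * ‖x‖ := fun x => by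
    rw [norm_smul, Real.norm_eq_abs, abs_of_pos hγpos]
  -- distance computation
  rw [Real.dist_eq, sub_zero, abs_of_nonneg (setIntegral_nonneg measurableSet_closedBall
    (fun x _ => abs_nonneg _))]
  -- split the integral
  have hsubδR : Metric.closedBall (0 : EuclideanSpace ℝ (Fin n)) δ ⊆ Metric.closedBall 0 R :=
    Metric.closedBall_subset_closedBall hδR
  have hsplit : (∫ x in Metric.closedBall (0 : EuclideanSpace ℝ (Fin n)) R,
      |f1 x - A * h' x|) =
      (∫ x in Metric.closedBall (0 : EuclideanSpace ℝ (Fin n)) δ, |f1 x - A * h' x|) +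
      ∫ x in Metric.closedBall (0 : EuclideanSpace ℝ (Fin n)) R \ Metric.closedBall 0 δ,
        |f1 x - A * h' x| := by
    rw [← setIntegral_union disjoint_sdiff_self_right
      (measurableSet_closedBall.diff measurableSet_closedBall)
      ((hIg R).mono_set hsubδR) ((hIg R).mono_set diff_subset),
      Set.union_diff_cancel hsubδR]
  -- piece 2
  have hp2 : (∫ x in Metric.closedBall (0 : EuclideanSpace ℝ (Fin n)) R \
      Metric.closedBall 0 δ, |f1 x - A * h' x|) ≤ ε' * c₀ := by
    have hb : ∀ x ∈ Metric.closedBall (0 : EuclideanSpace ℝ (Fin n)) R \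
        Metric.closedBall 0 δ, |f1 x - A * h' x| ≤ ε' * h' x := by
      rintro x ⟨hxR, hxδ⟩
      rw [mem_closedBall_zero_iff, not_le] at hxδ
      have hxpos : 0 < ‖x‖ := lt_trans hδpos hxδ
      have hx0 : x ≠ 0 := norm_pos_iff.mp hxpos
      have hyR : R₀ ≤ ‖γ • x‖ := by
        rw [hnormsmul x]
        calc R₀ ≤ γ * δ := hγδ
          _ ≤ γ * ‖x‖ := mul_le_mul_of_nonneg_left hxδ.le hγpos.le
      rw [hkey x hx0, abs_mul, abs_of_nonneg (Real.rpow_nonneg (norm_nonneg x) _)]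
      calc h' x * |‖γ • x‖ ^ q * ubar (γ • x) - A| ≤ h' x * ε' :=
            mul_le_mul_of_nonneg_left (hR₀ _ hyR) (Real.rpow_nonneg (norm_nonneg x) _)
        _ = ε' * h' x := mul_comm _ _
    calc (∫ x in Metric.closedBall (0 : EuclideanSpace ℝ (Fin n)) R \
        Metric.closedBall 0 δ, |f1 x - A * h' x|)
        ≤ ∫ x in Metric.closedBall (0 : EuclideanSpace ℝ (Fin n)) R \
            Metric.closedBall 0 δ, ε' * h' x :=
          setIntegral_mono_on ((hIg R).mono_set diff_subset)
            (IntegrableOn.mono_set ((hIh R).const_mul ε') diff_subset)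
            (measurableSet_closedBall.diff measurableSet_closedBall) hb
      _ ≤ ∫ x in Metric.closedBall (0 : EuclideanSpace ℝ (Fin n)) R, ε' * h' x :=
          setIntegral_mono_set ((hIh R).const_mul ε')
            (Eventually.of_forall fun x =>
              mul_nonneg hε'pos.le (Real.rpow_nonneg (norm_nonneg x) _))
            (HasSubset.Subset.eventuallyLE diff_subset)
      _ = ε' * c₀ := by rw [integral_const_mul]
  -- piece 1
  have hp1 : (∫ x in Metric.closedBall (0 : EuclideanSpace ℝ (Fin n)) δ,
      |f1 x - A * h' x|) ≤ γ ^ (q - (n:ℝ)) * M + (2 * A + 1) * cδ := by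
    have hf1nonneg : ∀ x, 0 ≤ f1 x := fun x => mul_nonneg
      (Real.rpow_nonneg hγpos.le q) (hnonneg _)
    have hh'nonneg : ∀ x : EuclideanSpace ℝ (Fin n), 0 ≤ h' x :=
      fun x => Real.rpow_nonneg (norm_nonneg x) _
    have step1 : (∫ x in Metric.closedBall (0 : EuclideanSpace ℝ (Fin n)) δ,
        |f1 x - A * h' x|) ≤
        (∫ x in Metric.closedBall (0 : EuclideanSpace ℝ (Fin n)) δ, f1 x) + A * cδ := by
      have : (∫ x in Metric.closedBall (0 : EuclideanSpace ℝ (Fin n)) δ,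
          |f1 x - A * h' x|) ≤
          ∫ x in Metric.closedBall (0 : EuclideanSpace ℝ (Fin n)) δ, f1 x + A * h' x := by
        refine setIntegral_mono_on ((hIg δ))
          ((hIf1 δ).add ((hIh δ).const_mul A)) measurableSet_closedBall fun x _ => ?_
        calc |f1 x - A * h' x| ≤ |f1 x| + |A * h' x| := abs_sub _ _
          _ = f1 x + A * h' x := by
            rw [abs_of_nonneg (hf1nonneg x), abs_of_nonneg (mul_nonneg hA.le (hh'nonneg x))]
      rw [integral_add (hIf1 δ) ((hIh δ).const_mul A), integral_const_mul A h'] at this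
      exact this
    -- split inner integral
    have hsubinner : Metric.closedBall (0 : EuclideanSpace ℝ (Fin n)) (R₀ / γ) ⊆
        Metric.closedBall 0 δ := Metric.closedBall_subset_closedBall hR₀γδ
    have step2 : (∫ x in Metric.closedBall (0 : EuclideanSpace ℝ (Fin n)) δ, f1 x) =
        (∫ x in Metric.closedBall (0 : EuclideanSpace ℝ (Fin n)) (R₀ / γ), f1 x) +
        ∫ x in Metric.closedBall (0 : EuclideanSpace ℝ (Fin n)) δ \
            Metric.closedBall 0 (R₀ / γ), f1 x := by
      rw [← setIntegral_union disjoint_sdiff_self_right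
        (measurableSet_closedBall.diff measurableSet_closedBall)
        ((hIf1 δ).mono_set hsubinner) ((hIf1 δ).mono_set diff_subset),
        Set.union_diff_cancel hsubinner]
    -- inner piece via change of variables
    have step3 : (∫ x in Metric.closedBall (0 : EuclideanSpace ℝ (Fin n)) (R₀ / γ), f1 x) =
        γ ^ (q - (n:ℝ)) * M := by
      have hsmul : γ • Metric.closedBall (0 : EuclideanSpace ℝ (Fin n)) (R₀ / γ) =
          Metric.closedBall 0 R₀ := by
        rw [smul_closedBall _ _ hR₀γpos.le, smul_zero, Real.norm_eq_abs, abs_of_pos hγpos,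
          mul_div_cancel₀ _ hγpos.ne']
      have hcv := Measure.setIntegral_comp_smul_of_pos volume ubar
        (Metric.closedBall (0 : EuclideanSpace ℝ (Fin n)) (R₀ / γ)) hγpos
      rw [hsmul] at hcv
      calc (∫ x in Metric.closedBall (0 : EuclideanSpace ℝ (Fin n)) (R₀ / γ), f1 x)
          = γ ^ q * ∫ x in Metric.closedBall (0 : EuclideanSpace ℝ (Fin n)) (R₀ / γ),
              ubar (γ • x) := by rw [hf1def, integral_const_mul]
        _ = γ ^ q * ((γ ^ Module.finrank ℝ (EuclideanSpace ℝ (Fin n)))⁻¹ • M) := by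
            rw [hcv, hMdef]
        _ = γ ^ (q - (n:ℝ)) * M := by
            rw [smul_eq_mul, finrank_euclideanSpace_fin, ← Real.rpow_natCast γ n,
              ← Real.rpow_neg hγpos.le, ← mul_assoc, ← Real.rpow_add hγpos, sub_eq_add_neg]
    -- outer piece bound
    have step4 : (∫ x in Metric.closedBall (0 : EuclideanSpace ℝ (Fin n)) δ \
        Metric.closedBall 0 (R₀ / γ), f1 x) ≤ (A + 1) * cδ := by
      have hb : ∀ x ∈ Metric.closedBall (0 : EuclideanSpace ℝ (Fin n)) δ \
          Metric.closedBall 0 (R₀ / γ), f1 x ≤ (A + 1) * h' x := by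
        rintro x ⟨hxδ, hxin⟩
        rw [mem_closedBall_zero_iff, not_le] at hxin
        have hxpos : 0 < ‖x‖ := lt_trans hR₀γpos hxin
        have hx0 : x ≠ 0 := norm_pos_iff.mp hxpos
        have hyR : R₀ ≤ ‖γ • x‖ := by
          rw [hnormsmul x]
          rw [div_lt_iff₀ hγpos] at hxin
          linarith [hxin, mul_comm γ (‖x‖)]
        have habs := hR₀ _ hyR
        have hle : ‖γ • x‖ ^ q * ubar (γ • x) - A ≤ 1 := by
          have := le_abs_self (‖γ • x‖ ^ q * ubar (γ • x) - A)
          linarith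
        have heq : f1 x = h' x * (‖γ • x‖ ^ q * ubar (γ • x) - A) + A * h' x := by
          have := hkey x hx0
          linarith
        rw [heq]
        have hh'x : 0 ≤ h' x := hh'nonneg x
        nlinarith [mul_le_mul_of_nonneg_left hle hh'x]
      calc (∫ x in Metric.closedBall (0 : EuclideanSpace ℝ (Fin n)) δ \
          Metric.closedBall 0 (R₀ / γ), f1 x)
          ≤ ∫ x in Metric.closedBall (0 : EuclideanSpace ℝ (Fin n)) δ \
              Metric.closedBall 0 (R₀ / γ), (A + 1) * h' x :=
            setIntegral_mono_on ((hIf1 δ).mono_set diff_subset)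
              (IntegrableOn.mono_set ((hIh δ).const_mul (A + 1)) diff_subset)
              (measurableSet_closedBall.diff measurableSet_closedBall) hb
        _ ≤ ∫ x in Metric.closedBall (0 : EuclideanSpace ℝ (Fin n)) δ, (A + 1) * h' x :=
            setIntegral_mono_set ((hIh δ).const_mul (A + 1))
              (Eventually.of_forall fun x =>
                mul_nonneg (by linarith) (hh'nonneg x))
              (HasSubset.Subset.eventuallyLE diff_subset)
        _ = (A + 1) * cδ := by rw [integral_const_mul]
    calc (∫ x in Metric.closedBall (0 : EuclideanSpace ℝ (Fin n)) δ, |f1 x - A * h' x|)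
        ≤ (∫ x in Metric.closedBall (0 : EuclideanSpace ℝ (Fin n)) δ, f1 x) + A * cδ := step1
      _ = ((∫ x in Metric.closedBall (0 : EuclideanSpace ℝ (Fin n)) (R₀ / γ), f1 x) +
          ∫ x in Metric.closedBall (0 : EuclideanSpace ℝ (Fin n)) δ \
            Metric.closedBall 0 (R₀ / γ), f1 x) + A * cδ := by rw [step2]
      _ ≤ (γ ^ (q - (n:ℝ)) * M + (A + 1) * cδ) + A * cδ := by
          rw [step3]
          linarith [step4]
      _ = γ ^ (q - (n:ℝ)) * M + (2 * A + 1) * cδ := by ring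
  have hΓγ := hΓ γ hγΓ
  calc (∫ x in Metric.closedBall (0 : EuclideanSpace ℝ (Fin n)) R, |f1 x - A * h' x|)
      = (∫ x in Metric.closedBall (0 : EuclideanSpace ℝ (Fin n)) δ, |f1 x - A * h' x|) +
        ∫ x in Metric.closedBall (0 : EuclideanSpace ℝ (Fin n)) R \
          Metric.closedBall 0 δ, |f1 x - A * h' x| := hsplit
    _ < ε := by linarith [hp1, hp2, hcδε, hε'c₀, hΓγ, hε]
end
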